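/- arXiv:1903.06639 — 6 statements merged into one kernel-verified Lean document; each statement's English description precedes it below -/
import Mathlib

section
/- In DC_{4n}, the subgroup generated by the two elements u = a^k x and v = a^m x equals the whole group DC_{4n} if and only if gcd(n, k - m) = 1. -/
/-!
Write `u = xa (-k)` and `v = xa (-m)`. Any subgroup containing both contains `a n = u ^ 2` and
`a (k - m) = u * v⁻¹`, hence `a 1` by Bézout when `gcd(n, k - m) = 1`, and then everything.
Conversely, for `d = gcd(n, k - m)`, which divides `2 * n`, the `a i` with `i ≡ 0` and the `xa i`
with `i ≡ -k` modulo `d` form a subgroup containing `u` and `v`; it contains `a 1` only if `d = 1`.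
-/

theorem one_mem_of_intCast_mem_of_gcd_eq_one {R : Type*} [Ring R] {I : AddSubgroup R} {x y : ℤ}
    (hx : (x : R) ∈ I) (hy : (y : R) ∈ I) (hxy : Int.gcd x y = 1) : (1 : R) ∈ I := by
  obtain ⟨u, v, huv⟩ := Int.isCoprime_iff_gcd_eq_one.mpr hxy
  have h1 : (1 : R) = u • (x : R) + v • (y : R) := by
    rw [zsmul_eq_mul, zsmul_eq_mul, ← Int.cast_mul, ← Int.cast_mul, ← Int.cast_add, huv,
      Int.cast_one]
  rw [h1]
  exact add_mem (I.zsmul_mem hx u) (I.zsmul_mem hy v)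

namespace QuaternionGroup

variable {n : ℕ}

theorem inv_a (i : ZMod (2 * n)) : (a i)⁻¹ = a (-i) := rfl

theorem inv_xa (i : ZMod (2 * n)) : (xa i)⁻¹ = xa ((n : ZMod (2 * n)) + i) := rfl

theorem a_one_zpow (j : ℤ) : (a 1 : QuaternionGroup n) ^ j = a j := by
  cases j with
  | ofNat j => simp [a_one_pow]
  | negSucc j => simp [zpow_negSucc, a_one_pow, inv_a]

theorem xa_mul_inv_xa (s t : ZMod (2 * n)) : xa s * (xa t)⁻¹ = a (t - s) := by
  have h2n : (2 * n : ZMod (2 * n)) = 0 := by exact_mod_cast ZMod.natCast_self (2 * n)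
  rw [inv_xa, xa_mul_xa]
  congr 1
  linear_combination h2n

def aIndices (H : Subgroup (QuaternionGroup n)) : AddSubgroup (ZMod (2 * n)) where
  carrier := {i | a i ∈ H}
  zero_mem' := by simp [a_zero]
  add_mem' hi hj := by simpa using H.mul_mem hi hj
  neg_mem' hi := by simpa [inv_a] using H.inv_mem hi

@[simp]
theorem mem_aIndices {H : Subgroup (QuaternionGroup n)} {i : ZMod (2 * n)} :
    i ∈ aIndices H ↔ a i ∈ H := Iff.rfl

section

variable {H : Subgroup (QuaternionGroup n)} {s t : ZMod (2 * n)}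

theorem natCast_mem_aIndices (hs : xa s ∈ H) : (n : ZMod (2 * n)) ∈ aIndices H := by
  simpa [xa_sq] using H.pow_mem hs 2

theorem sub_mem_aIndices (hs : xa s ∈ H) (ht : xa t ∈ H) : t - s ∈ aIndices H := by
  simpa [xa_mul_inv_xa] using H.mul_mem hs (H.inv_mem ht)

theorem eq_top_of_one_mem_aIndices (h1 : 1 ∈ aIndices H) (hs : xa s ∈ H) : H = ⊤ := by
  have ha : ∀ i, a i ∈ H := fun i => by
    simpa [a_one_zpow] using H.zpow_mem (mem_aIndices.mp h1) (i.cast : ℤ)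
  rw [eq_top_iff]
  rintro (i | i) -
  · exact ha i
  · simpa [a_mul_xa] using H.mul_mem (ha (s - i)) hs

end

def cosetSubgroup (I : AddSubgroup (ZMod (2 * n))) (hI : (n : ZMod (2 * n)) ∈ I)
    (s : ZMod (2 * n)) : Subgroup (QuaternionGroup n) where
  carrier := {g | match g with
    | a i => i ∈ I
    | xa i => i - s ∈ I}
  one_mem' := I.zero_mem
  mul_mem' := by
    rintro (i | i) (j | j) hi hj <;> simp only [Set.mem_ofPred_eq, a_mul_a, a_mul_xa, xa_mul_a,
      xa_mul_xa] at hi hj ⊢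
    · exact I.add_mem hi hj
    · simpa [sub_right_comm] using I.sub_mem hj hi
    · simpa [sub_add_eq_add_sub] using I.add_mem hi hj
    · simpa [add_sub_assoc] using I.add_mem hI (I.sub_mem hj hi)
  inv_mem' := by
    rintro (i | i) hi <;> simp only [Set.mem_ofPred_eq, inv_a, inv_xa] at hi ⊢
    · exact I.neg_mem hi
    · simpa [add_sub_assoc] using I.add_mem hI hi

theorem closure_xa_pair_le_cosetSubgroup {I : AddSubgroup (ZMod (2 * n))}
    (hI : (n : ZMod (2 * n)) ∈ I) {s t : ZMod (2 * n)} (hst : t - s ∈ I) :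
    Subgroup.closure {xa s, xa t} ≤ cosetSubgroup I hI s := by
  rw [Subgroup.closure_le]
  rintro g (rfl | rfl)
  · show s - s ∈ I
    simp
  · exact hst

theorem gcd_eq_one_of_a_one_mem_closure {s t : ℤ}
    (h : a 1 ∈ Subgroup.closure {xa (s : ZMod (2 * n)), xa t}) : Int.gcd n (t - s) = 1 := by
  set d := Int.gcd n (t - s)
  have hd : d ∣ 2 * n := (Int.natCast_dvd_natCast.mp (Int.gcd_dvd_left _ _)).mul_left 2
  let φ := ZMod.castHom hd (ZMod d)
  have hker {x : ℤ} (hx : (d : ℤ) ∣ x) : (x : ZMod (2 * n)) ∈ (RingHom.ker φ).toAddSubgroup := by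
    simpa [φ, ZMod.intCast_zmod_eq_zero_iff_dvd] using hx
  have hn : (n : ZMod (2 * n)) ∈ (RingHom.ker φ).toAddSubgroup := by
    simpa using hker (Int.gcd_dvd_left (n : ℤ) (t - s))
  have hst : (t : ZMod (2 * n)) - s ∈ (RingHom.ker φ).toAddSubgroup := by
    simpa using hker (Int.gcd_dvd_right (n : ℤ) (t - s))
  have h1 : (1 : ZMod (2 * n)) ∈ (RingHom.ker φ).toAddSubgroup :=
    closure_xa_pair_le_cosetSubgroup hn hst h
  have hφ1 : φ 1 = 0 := RingHom.mem_ker.mp h1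
  rwa [map_one, ZMod.one_eq_zero_iff] at hφ1

theorem closure_xa_pair_eq_top_iff (s t : ℤ) :
    Subgroup.closure {xa (s : ZMod (2 * n)), xa t} = ⊤ ↔ Int.gcd n (t - s) = 1 := by
  refine ⟨fun htop => gcd_eq_one_of_a_one_mem_closure (htop ▸ Subgroup.mem_top _), fun hgcd => ?_⟩
  set H := Subgroup.closure {xa (s : ZMod (2 * n)), xa (t : ZMod (2 * n))}
  have hs : xa (s : ZMod (2 * n)) ∈ H := Subgroup.subset_closure (.inl rfl)
  have ht : xa (t : ZMod (2 * n)) ∈ H := Subgroup.subset_closure (.inr rfl)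
  refine eq_top_of_one_mem_aIndices ?_ hs
  refine one_mem_of_intCast_mem_of_gcd_eq_one (x := n) ?_ ?_ hgcd
  · exact_mod_cast natCast_mem_aIndices hs
  · exact_mod_cast sub_mem_aIndices hs ht

end QuaternionGroup

theorem dicyclic_two_order4_generate_iff_general (n : ℕ) (k m : ℤ) :
    Subgroup.closure
        ({(QuaternionGroup.a 1 : QuaternionGroup n) ^ k * QuaternionGroup.xa 0,
          (QuaternionGroup.a 1 : QuaternionGroup n) ^ m * QuaternionGroup.xa 0} :
          Set (QuaternionGroup n)) = ⊤ ↔ Int.gcd (n : ℤ) (k - m) = 1 := by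
  have hxa (j : ℤ) : (QuaternionGroup.a 1 : QuaternionGroup n) ^ j * QuaternionGroup.xa 0 =
      QuaternionGroup.xa ((-j : ℤ) : ZMod (2 * n)) := by
    rw [QuaternionGroup.a_one_zpow, QuaternionGroup.a_mul_xa, zero_sub, Int.cast_neg]
  rw [hxa, hxa, QuaternionGroup.closure_xa_pair_eq_top_iff, neg_sub_neg, ← Int.gcd_neg, neg_sub]

/-- In `DC_{4n}`, the subgroup generated by `u = a^k x` and `v = a^m x` is the whole group
iff `gcd(n, k - m) = 1`. -/
theorem dicyclic_two_order4_generate_iff (n : ℕ) (hn : 2 ≤ n) (k m : ℤ) :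
    Subgroup.closure
        ({(QuaternionGroup.a 1 : QuaternionGroup n) ^ k * QuaternionGroup.xa 0,
          (QuaternionGroup.a 1 : QuaternionGroup n) ^ m * QuaternionGroup.xa 0} :
          Set (QuaternionGroup n)) = ⊤ ↔ Int.gcd (n : ℤ) (k - m) = 1 :=
  dicyclic_two_order4_generate_iff_general n k m
end

section
/- If gcd(n, k - m) = 1 with k, m integers, then the element a belongs to the subgroup of DC_{4n} generated by u = a^k x and v = a^m x; specifically, writing 1 = αn + β(k - m), one has a = u^{2α}(u^{-1}v)^{β}. -/
open QuaternionGroup in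
lemma qg_a_inv (n : ℕ) (i : ZMod (2*n)) : (a i : QuaternionGroup n)⁻¹ = a (-i) := rfl

open QuaternionGroup in
lemma qg_xa_inv (n : ℕ) (i : ZMod (2*n)) :
    (xa i : QuaternionGroup n)⁻¹ = xa ((n : ZMod (2*n)) + i) := rfl

open QuaternionGroup in
lemma qg_a_pow (n : ℕ) (i : ZMod (2*n)) (p : ℕ) :
    (a i : QuaternionGroup n) ^ p = a ((p : ZMod (2*n)) * i) := by
  induction p with
  | zero => simp
  | succ p ih => rw [pow_succ, ih, a_mul_a]; push_cast; ring_nf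

open QuaternionGroup in
lemma qg_a_zpow (n : ℕ) (i : ZMod (2*n)) (z : ℤ) :
    (a i : QuaternionGroup n) ^ z = a ((z : ZMod (2*n)) * i) := by
  cases z with
  | ofNat p => rw [Int.ofNat_eq_coe, zpow_natCast, qg_a_pow]; push_cast; ring_nf
  | negSucc p =>
      rw [zpow_negSucc, qg_a_pow, qg_a_inv]
      congr 1
      push_cast [Int.negSucc_eq]
      ring

/-- If `gcd(n, k - m) = 1` and `1 = α n + β (k - m)`, then
`a = u^{2α} (u⁻¹ v)^β` for `u = a^k x`, `v = a^m x`; in particular `a` lies in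
the subgroup generated by `u` and `v`. -/
theorem dicyclic_a_in_closure (n : ℕ) (hn : 2 ≤ n) (k m α β : ℤ)
    (hgcd : Int.gcd (n : ℤ) (k - m) = 1)
    (hbezout : 1 = α * (n : ℤ) + β * (k - m)) :
    (QuaternionGroup.a 1 : QuaternionGroup n) =
      ((QuaternionGroup.a 1 : QuaternionGroup n) ^ k * QuaternionGroup.xa 0) ^ (2 * α) *
        ((((QuaternionGroup.a 1 : QuaternionGroup n) ^ k * QuaternionGroup.xa 0)⁻¹ *
          ((QuaternionGroup.a 1 : QuaternionGroup n) ^ m * QuaternionGroup.xa 0)) ^ β) ∧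
    (QuaternionGroup.a 1 : QuaternionGroup n) ∈
      Subgroup.closure
        ({(QuaternionGroup.a 1 : QuaternionGroup n) ^ k * QuaternionGroup.xa 0,
          (QuaternionGroup.a 1 : QuaternionGroup n) ^ m * QuaternionGroup.xa 0} :
          Set (QuaternionGroup n)) := by
  open QuaternionGroup in
  have key : (QuaternionGroup.a 1 : QuaternionGroup n) =
      ((QuaternionGroup.a 1 : QuaternionGroup n) ^ k * QuaternionGroup.xa 0) ^ (2 * α) *
        ((((QuaternionGroup.a 1 : QuaternionGroup n) ^ k * QuaternionGroup.xa 0)⁻¹ *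
          ((QuaternionGroup.a 1 : QuaternionGroup n) ^ m * QuaternionGroup.xa 0)) ^ β) := by
    rw [qg_a_zpow, qg_a_zpow, a_mul_xa, a_mul_xa, qg_xa_inv, xa_mul_xa, zpow_mul,
      show ((2:ℤ) = ((2:ℕ):ℤ)) by rfl, zpow_natCast, xa_sq]
    rw [show ((0 : ZMod (2*n)) - ↑k * 1) = -(k : ZMod (2*n)) by ring]
    rw [show ((n : ZMod (2*n)) + (0 - ↑m * 1) - ((n : ZMod (2*n)) + -↑k))
        = ((k : ZMod (2*n)) - m) by ring]
    rw [qg_a_zpow, qg_a_zpow, a_mul_a]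
    congr 1
    have : ((1 : ℤ) : ZMod (2*n)) = ((α * n + β * (k - m) : ℤ) : ZMod (2*n)) := by
      rw [← hbezout]
    push_cast at this ⊢
    rw [this]
  refine ⟨key, ?_⟩
  have hu : ((QuaternionGroup.a 1 : QuaternionGroup n) ^ k * QuaternionGroup.xa 0) ∈
      Subgroup.closure
        ({(QuaternionGroup.a 1 : QuaternionGroup n) ^ k * QuaternionGroup.xa 0,
          (QuaternionGroup.a 1 : QuaternionGroup n) ^ m * QuaternionGroup.xa 0} :
          Set (QuaternionGroup n)) :=
    Subgroup.subset_closure (Set.mem_insert _ _)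
  have hv : ((QuaternionGroup.a 1 : QuaternionGroup n) ^ m * QuaternionGroup.xa 0) ∈
      Subgroup.closure
        ({(QuaternionGroup.a 1 : QuaternionGroup n) ^ k * QuaternionGroup.xa 0,
          (QuaternionGroup.a 1 : QuaternionGroup n) ^ m * QuaternionGroup.xa 0} :
          Set (QuaternionGroup n)) :=
    Subgroup.subset_closure (Set.mem_insert_of_mem _ rfl)
  have hmem := mul_mem (zpow_mem hu (2*α)) (zpow_mem (mul_mem (inv_mem hu) hv) β)
  exact Eq.mpr (congrArg (· ∈ Subgroup.closure
        ({(QuaternionGroup.a 1 : QuaternionGroup n) ^ k * QuaternionGroup.xa 0,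
          (QuaternionGroup.a 1 : QuaternionGroup n) ^ m * QuaternionGroup.xa 0} :
          Set (QuaternionGroup n))) key) hmem
end

section
/- Let d = gcd(n, k - m) > 1. Call a subset Y of DC_{4n} d-special if every element of Y lying in the cyclic subgroup ⟨a⟩ lies in ⟨a^d⟩, and any two elements a^{k₁}x, a^{k₂}x of Y satisfy k₁ ≡ k₂ (mod d). Then the product of any two elements of a d-special set closed appropriately remains d-special; in particular, the subgroup generated by {a^k x, a^m x} is contained in a proper d-special subset of DC_{4n}, hence ⟨a^k x, a^m x⟩ ≠ DC_{4n}. -/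
/-- A subset `Y` of `DC_{4n}` is `d`-special if every element of `Y` lying in `⟨a⟩` lies in
`⟨a^d⟩`, and any two elements `a^{k₁} x, a^{k₂} x` of `Y` satisfy `k₁ ≡ k₂ (mod d)`. -/
def DSpecial (n : ℕ) (d : ℕ) (Y : Set (QuaternionGroup n)) : Prop :=
  (∀ g ∈ Y, g ∈ Subgroup.zpowers (QuaternionGroup.a 1 : QuaternionGroup n) →
      g ∈ Subgroup.zpowers ((QuaternionGroup.a 1 : QuaternionGroup n) ^ (d : ℤ))) ∧
  (∀ k₁ k₂ : ℤ,
      (QuaternionGroup.a 1 : QuaternionGroup n) ^ k₁ * QuaternionGroup.xa 0 ∈ Y →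
      (QuaternionGroup.a 1 : QuaternionGroup n) ^ k₂ * QuaternionGroup.xa 0 ∈ Y →
      k₁ ≡ k₂ [ZMOD (d : ℤ)])

theorem a_one_zpow (n : ℕ) (z : ℤ) :
    (QuaternionGroup.a 1 : QuaternionGroup n) ^ z = QuaternionGroup.a (z : ZMod (2 * n)) := by
  obtain ⟨p, rfl | rfl⟩ := z.eq_nat_or_neg
  · rw [zpow_natCast, QuaternionGroup.a_one_pow]; push_cast; rfl
  · rw [zpow_neg, zpow_natCast, QuaternionGroup.a_one_pow]
    push_cast
    rfl

/-- If `d = gcd(n, k - m) > 1`, then the subgroup generated by `{a^k x, a^m x}` is contained in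
a proper `d`-special subset of `DC_{4n}`; in particular `⟨a^k x, a^m x⟩ ≠ DC_{4n}`. -/
theorem dicyclic_not_generating_of_gcd_gt_one (n : ℕ) (hn : 2 ≤ n) (k m : ℤ)
    (hd : 1 < Int.gcd (n : ℤ) (k - m)) :
    (∃ Y : Set (QuaternionGroup n),
        DSpecial n (Int.gcd (n : ℤ) (k - m)) Y ∧ Y ≠ Set.univ ∧
        (Subgroup.closure
            ({(QuaternionGroup.a 1 : QuaternionGroup n) ^ k * QuaternionGroup.xa 0,
              (QuaternionGroup.a 1 : QuaternionGroup n) ^ m * QuaternionGroup.xa 0} :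
              Set (QuaternionGroup n)) : Set (QuaternionGroup n)) ⊆ Y) ∧
    Subgroup.closure
        ({(QuaternionGroup.a 1 : QuaternionGroup n) ^ k * QuaternionGroup.xa 0,
          (QuaternionGroup.a 1 : QuaternionGroup n) ^ m * QuaternionGroup.xa 0} :
          Set (QuaternionGroup n)) ≠ ⊤ := by
  set d : ℕ := Int.gcd (n : ℤ) (k - m) with hdd
  have hdn : d ∣ n := Int.ofNat_dvd.mp (Int.gcd_dvd_left _ _)
  have hdkm : (d : ℤ) ∣ k - m := Int.gcd_dvd_right _ _
  have hd2n : d ∣ 2 * n := hdn.mul_left 2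
  haveI : Fact (1 < d) := ⟨hd⟩
  set φ : ZMod (2 * n) →+* ZMod d := ZMod.castHom hd2n (ZMod d) with hφ
  have hφn : φ (n : ZMod (2 * n)) = 0 := by
    rw [map_natCast]
    exact (ZMod.natCast_eq_zero_iff n d).mpr hdn
  -- the subgroup
  set H : Subgroup (QuaternionGroup n) :=
    { carrier := fun g => match g with
        | QuaternionGroup.a i => φ i = 0
        | QuaternionGroup.xa i => φ i = ((-k : ℤ) : ZMod d)
      one_mem' := by show φ 0 = 0; simp
      mul_mem' := by
        rintro (i | i) (j | j) hi hj
        · show φ (i + j) = 0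
          simp only [map_add]
          change φ i = 0 at hi; change φ j = 0 at hj
          rw [hi, hj, add_zero]
        · show φ (j - i) = _
          change φ i = 0 at hi; change φ j = _ at hj
          rw [map_sub, hi, hj, sub_zero]
        · show φ (i + j) = _
          change φ i = _ at hi; change φ j = 0 at hj
          rw [map_add, hi, hj, add_zero]
        · show φ ((n : ZMod (2 * n)) + j - i) = 0
          change φ i = _ at hi; change φ j = _ at hj
          rw [map_sub, map_add, hφn, hi, hj]
          ring
      inv_mem' := by
        rintro (i | i) hi
        · show φ (-i) = 0
          change φ i = 0 at hi
          rw [map_neg, hi, neg_zero]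
        · show φ ((n : ZMod (2 * n)) + i) = _
          change φ i = _ at hi
          rw [map_add, hφn, hi, zero_add] } with hH
  have hgen : ∀ z : ℤ, (QuaternionGroup.a 1 : QuaternionGroup n) ^ z * QuaternionGroup.xa 0
      = QuaternionGroup.xa ((-z : ℤ) : ZMod (2 * n)) := by
    intro z
    rw [a_one_zpow, QuaternionGroup.a_mul_xa]
    push_cast
    rw [zero_sub]
  have hmemxa : ∀ z : ℤ,
      ((QuaternionGroup.a 1 : QuaternionGroup n) ^ z * QuaternionGroup.xa 0 ∈ (H : Set _)) ↔
        ((-z : ℤ) : ZMod d) = ((-k : ℤ) : ZMod d) := by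
    intro z
    rw [hgen z]
    constructor
    · intro h
      have : φ (((-z : ℤ)) : ZMod (2 * n)) = ((-k : ℤ) : ZMod d) := h
      rwa [map_intCast] at this
    · intro h
      show φ (((-z : ℤ)) : ZMod (2 * n)) = ((-k : ℤ) : ZMod d)
      rwa [map_intCast]
  have hsub : (Subgroup.closure
      ({(QuaternionGroup.a 1 : QuaternionGroup n) ^ k * QuaternionGroup.xa 0,
        (QuaternionGroup.a 1 : QuaternionGroup n) ^ m * QuaternionGroup.xa 0} :
        Set (QuaternionGroup n)) : Set (QuaternionGroup n)) ⊆ (H : Set _) := by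
    refine SetLike.coe_subset_coe.mpr ((Subgroup.closure_le H).mpr ?_)
    rintro g (rfl | rfl)
    · exact (hmemxa k).mpr rfl
    · refine (hmemxa m).mpr ?_
      have : ((k - m : ℤ) : ZMod d) = 0 := by
        exact_mod_cast (ZMod.intCast_zmod_eq_zero_iff_dvd _ _).mpr hdkm
      push_cast at this ⊢
      linear_combination this
  have hne : (H : Set (QuaternionGroup n)) ≠ Set.univ := by
    intro h
    have h1 : (QuaternionGroup.a 1 : QuaternionGroup n) ∈ (H : Set _) := h ▸ Set.mem_univ _
    have : φ (1 : ZMod (2 * n)) = 0 := h1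
    rw [map_one] at this
    exact one_ne_zero this
  refine ⟨⟨(H : Set _), ⟨?_, ?_⟩, hne, hsub⟩, ?_⟩
  · rintro g hg hz
    obtain ⟨z, hz⟩ := Subgroup.mem_zpowers_iff.mp hz
    rw [← hz] at hg ⊢
    rw [a_one_zpow] at hg
    have : φ ((z : ℤ) : ZMod (2 * n)) = 0 := hg
    rw [map_intCast] at this
    obtain ⟨t, rfl⟩ := (ZMod.intCast_zmod_eq_zero_iff_dvd z d).mp this
    exact ⟨t, by show (QuaternionGroup.a 1 ^ (d : ℤ)) ^ t = _; rw [← zpow_mul]⟩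
  · intro k₁ k₂ h1 h2
    have e1 := (hmemxa k₁).mp h1
    have e2 := (hmemxa k₂).mp h2
    have : ((k₁ : ℤ) : ZMod d) = ((k₂ : ℤ) : ZMod d) := by
      have := e1.trans e2.symm
      push_cast at this ⊢
      linear_combination -this
    exact (ZMod.intCast_eq_intCast_iff k₁ k₂ d).mp this
  · intro htop
    apply hne
    rw [htop] at hsub
    exact Set.eq_univ_of_univ_subset (by simpa using hsub)
end

section
/- The dicyclic group DC_{4n} is isomorphic to the group Π_{4n,1} with presentation ⟨u, v | u^2 = v^2, u^4 = e, u^2(u^3 v)^n = e⟩, via the map sending a ↦ u^3 v and x ↦ v (with inverse u ↦ ax, v ↦ x). -/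
/-- Relations of `Π_{4n,1} = ⟨u, v | u² = v², u⁴ = e, u²(u³v)ⁿ = e⟩`,
with `u` encoded as `FreeGroup.of true` and `v` as `FreeGroup.of false`. -/
def piRels1 (n : ℕ) : Set (FreeGroup Bool) :=
  {FreeGroup.of true ^ 2 * (FreeGroup.of false ^ 2)⁻¹,
   FreeGroup.of true ^ 4,
   FreeGroup.of true ^ 2 * (FreeGroup.of true ^ 3 * FreeGroup.of false) ^ n}

namespace DicycAux

open QuaternionGroup PresentedGroup

variable (n : ℕ)

private def uu : PresentedGroup (piRels1 n) := .of true
private def vv : PresentedGroup (piRels1 n) := .of false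
private def AA : PresentedGroup (piRels1 n) := uu n ^ 3 * vv n

private lemma rel_one {r : FreeGroup Bool} (hr : r ∈ piRels1 n) :
    PresentedGroup.mk (piRels1 n) r = 1 := by
  rw [PresentedGroup.mk_eq_one_iff]
  exact Subgroup.subset_normalClosure hr

private lemma rel1 : uu n ^ 2 = vv n ^ 2 := by
  have h := rel_one n (show _ ∈ piRels1 n from Set.mem_insert _ _)
  rw [map_mul, map_inv, map_pow, map_pow, mul_inv_eq_one] at h
  exact h

private lemma rel2 : uu n ^ 4 = 1 := by
  have h := rel_one n (show FreeGroup.of true ^ 4 ∈ piRels1 n from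
    Set.mem_insert_of_mem _ (Set.mem_insert _ _))
  rwa [map_pow] at h

private lemma rel3 : uu n ^ 2 * AA n ^ n = 1 := by
  have h := rel_one n (show FreeGroup.of true ^ 2 *
      (FreeGroup.of true ^ 3 * FreeGroup.of false) ^ n ∈ piRels1 n from
    Set.mem_insert_of_mem _ (Set.mem_insert_of_mem _ rfl))
  rwa [map_mul, map_pow, map_pow, map_mul, map_pow] at h

private lemma AA_pow_n : AA n ^ n = uu n ^ 2 := by
  have h := rel3 n
  have h2 : uu n ^ 2 * uu n ^ 2 = 1 := by
    rw [← pow_add]; exact rel2 n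
  have hAn : AA n ^ n = (uu n ^ 2)⁻¹ := (inv_eq_of_mul_eq_one_right h).symm
  rw [hAn, inv_eq_of_mul_eq_one_right h2]

private lemma AA_pow_2n : AA n ^ (2 * n) = 1 := by
  rw [mul_comm, pow_mul, AA_pow_n, ← pow_mul]
  have : 2 * 2 = 4 := rfl
  rw [this, rel2]

private lemma u_eq : uu n = (uu n ^ 3)⁻¹ := by
  apply eq_inv_of_mul_eq_one_left
  rw [← pow_succ']
  exact rel2 n

private lemma AX : AA n * vv n = vv n * (AA n)⁻¹ := by
  have h1 : AA n * vv n = uu n := by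
    rw [AA, mul_assoc, ← sq, ← rel1, ← pow_add]
    have : 3 + 2 = 4 + 1 := rfl
    rw [this, pow_add, rel2, one_mul, pow_one]
  have h2 : vv n * (AA n)⁻¹ = uu n := by
    rw [AA, mul_inv_rev, ← mul_assoc, mul_inv_cancel, one_mul, ← u_eq]
  rw [h1, h2]

private lemma X_sq : vv n ^ 2 = AA n ^ n := by
  rw [AA_pow_n, rel1]

private lemma pow_AX (k : ℕ) : AA n ^ k * vv n = vv n * ((AA n) ^ k)⁻¹ := by
  induction k with
  | zero => simp
  | succ k ih =>
    rw [pow_succ, mul_assoc, AX, ← mul_assoc, ih, mul_assoc, ← mul_inv_rev, ← pow_succ', pow_succ]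

private lemma AA_mod (k : ℕ) : AA n ^ (k % (2 * n)) = AA n ^ k := by
  conv_rhs => rw [← Nat.mod_add_div k (2 * n)]
  rw [pow_add, pow_mul, AA_pow_2n, one_pow, mul_one]

/-- `aᶦ` interpreted in the presented group. -/
private def pp (i : ZMod (2 * n)) : PresentedGroup (piRels1 n) := AA n ^ i.val

private lemma padd (hn : 2 ≤ n) (i j : ZMod (2 * n)) : pp n (i + j) = pp n i * pp n j := by
  haveI : NeZero (2 * n) := ⟨by omega⟩
  rw [pp, pp, pp, ZMod.val_add, AA_mod, pow_add]

private lemma psub (hn : 2 ≤ n) (i j : ZMod (2 * n)) : pp n (j - i) = pp n j * (pp n i)⁻¹ := by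
  have := padd n hn (j - i) i
  rw [sub_add_cancel] at this
  rw [eq_mul_inv_iff_mul_eq, ← this]

private lemma pn (hn : 2 ≤ n) : pp n (n : ZMod (2 * n)) = AA n ^ n := by
  haveI : NeZero (2 * n) := ⟨by omega⟩
  rw [pp, ZMod.val_natCast, Nat.mod_eq_of_lt (by omega)]

private lemma pone (hn : 2 ≤ n) : pp n (1 : ZMod (2 * n)) = AA n := by
  haveI : Fact (1 < 2 * n) := ⟨by omega⟩
  rw [pp, ZMod.val_one, pow_one]

private lemma pcomm (i j : ZMod (2 * n)) : (pp n i)⁻¹ * pp n j = pp n j * (pp n i)⁻¹ :=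
  (((Commute.refl (AA n)).pow_pow i.val j.val).inv_left).eq

private lemma pX (i : ZMod (2 * n)) : pp n i * vv n = vv n * (pp n i)⁻¹ :=
  pow_AX n i.val

/-- The underlying function of the hom `DC_{4n} → Π_{4n,1}`. -/
private def ff : QuaternionGroup n → PresentedGroup (piRels1 n)
  | .a i => pp n i
  | .xa i => vv n * pp n i

private lemma key (i j : ZMod (2 * n)) :
    pp n i * (vv n * pp n j) = vv n * pp n j * (pp n i)⁻¹ := by
  rw [← mul_assoc, pX, mul_assoc, pcomm n i j, ← mul_assoc]

private lemma ff_mul (hn : 2 ≤ n) (x y : QuaternionGroup n) :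
    ff n (x * y) = ff n x * ff n y := by
  cases x with
  | a i =>
    cases y with
    | a j =>
      show pp n (i + j) = pp n i * pp n j
      exact padd n hn i j
    | xa j =>
      show vv n * pp n (j - i) = pp n i * (vv n * pp n j)
      rw [psub n hn, key, ← mul_assoc]
  | xa i =>
    cases y with
    | a j =>
      show vv n * pp n (i + j) = vv n * pp n i * pp n j
      rw [padd n hn, mul_assoc]
    | xa j =>
      show pp n ((n : ZMod (2 * n)) + j - i) = (vv n * pp n i) * (vv n * pp n j)
      rw [psub n hn, padd n hn, pn n hn, ← X_sq, mul_assoc (vv n), key, sq]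
      group

/-- The hom `DC_{4n} → Π_{4n,1}`. -/
private def fhom (hn : 2 ≤ n) : QuaternionGroup n →* PresentedGroup (piRels1 n) :=
  MonoidHom.mk' (ff n) (ff_mul n hn)

private def gfun : Bool → QuaternionGroup n := fun b => if b then .xa (-1) else .xa 0

private lemma grels : ∀ r ∈ piRels1 n, FreeGroup.lift (gfun n) r = 1 := by
  intro r hr
  have hU : FreeGroup.lift (gfun n) (FreeGroup.of true) = .xa (-1) := by
    simp [gfun]
  have hV : FreeGroup.lift (gfun n) (FreeGroup.of false) = .xa 0 := by
    simp [gfun]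
  have hUV : (xa (-1) : QuaternionGroup n) ^ 3 * xa 0 = a 1 := by
    have h3 : (xa (-1) : QuaternionGroup n) ^ 3 = xa (-1) ^ 2 * xa (-1) := by
      rw [← pow_succ]
    rw [h3, xa_sq, a_mul_xa, xa_mul_xa]
    congr 1
    have : ((2 * n : ℕ) : ZMod (2 * n)) = 0 := ZMod.natCast_self _
    push_cast at this ⊢
    linear_combination this
  have hansq : (a (n : ZMod (2 * n)) : QuaternionGroup n) * a (n : ZMod (2 * n)) = 1 := by
    rw [a_mul_a, one_def]
    congr 1
    have : ((2 * n : ℕ) : ZMod (2 * n)) = 0 := ZMod.natCast_self _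
    push_cast at this ⊢
    linear_combination this
  rcases hr with h | h | h <;> subst h
  · rw [map_mul, map_inv, map_pow, map_pow, hU, hV, xa_sq, xa_sq, mul_inv_cancel]
  · rw [map_pow, hU, xa_pow_four]
  · rw [map_mul, map_pow, map_pow, map_mul, map_pow, hU, hV, hUV, xa_sq, a_one_pow, hansq]

/-- The hom `Π_{4n,1} → DC_{4n}`. -/
private def ghom : PresentedGroup (piRels1 n) →* QuaternionGroup n :=
  PresentedGroup.toGroup (grels n)

private lemma ghom_u : ghom n (uu n) = .xa (-1) := by
  rw [uu, ghom, toGroup.of]; simp [gfun]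

private lemma ghom_v : ghom n (vv n) = .xa 0 := by
  rw [vv, ghom, toGroup.of]; simp [gfun]

private lemma ghom_A : ghom n (AA n) = .a 1 := by
  rw [AA, map_mul, map_pow, ghom_u, ghom_v]
  have h3 : (xa (-1) : QuaternionGroup n) ^ 3 = xa (-1) ^ 2 * xa (-1) := by
    rw [← pow_succ]
  rw [h3, xa_sq, a_mul_xa, xa_mul_xa]
  congr 1
  have : ((2 * n : ℕ) : ZMod (2 * n)) = 0 := ZMod.natCast_self _
  push_cast at this ⊢
  linear_combination this

private lemma gf_id (hn : 2 ≤ n) : (ghom n).comp (fhom n hn) = MonoidHom.id _ := by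
  haveI : NeZero (2 * n) := ⟨by omega⟩
  ext x
  cases x with
  | a i =>
    show ghom n (pp n i) = a i
    rw [pp, map_pow, ghom_A, a_one_pow, ZMod.natCast_val, ZMod.cast_id]
  | xa i =>
    show ghom n (vv n * pp n i) = xa i
    rw [map_mul, ghom_v, pp, map_pow, ghom_A, a_one_pow, ZMod.natCast_val, ZMod.cast_id,
      xa_mul_a, zero_add]

private lemma fg_id (hn : 2 ≤ n) : (fhom n hn).comp (ghom n) = MonoidHom.id _ := by
  haveI : NeZero (2 * n) := ⟨by omega⟩
  apply PresentedGroup.ext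
  intro x
  cases x with
  | true =>
    show fhom n hn (ghom n (uu n)) = uu n
    rw [ghom_u]
    show vv n * pp n (-1) = uu n
    have hinv : pp n (-1) = (AA n)⁻¹ := by
      have := padd n hn (-1) 1
      rw [neg_add_cancel, pone n hn] at this
      have h0 : pp n 0 = 1 := by rw [pp, ZMod.val_zero, pow_zero]
      rw [h0] at this
      rw [eq_inv_iff_mul_eq_one, ← this]
    rw [hinv, AA, mul_inv_rev, ← mul_assoc, mul_inv_cancel, one_mul, ← u_eq, uu]
  | false =>
    show fhom n hn (ghom n (vv n)) = vv n
    rw [ghom_v]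
    show vv n * pp n 0 = vv n
    rw [pp, ZMod.val_zero, pow_zero, mul_one]

end DicycAux

/-- `DC_{4n} ≅ Π_{4n,1}` via `a ↦ u³v`, `x ↦ v`. -/
theorem dicyclic_iso_pi1 (n : ℕ) (hn : 2 ≤ n) :
    ∃ φ : QuaternionGroup n ≃* PresentedGroup (piRels1 n),
      φ (QuaternionGroup.a 1) =
        (PresentedGroup.of true : PresentedGroup (piRels1 n)) ^ 3 * PresentedGroup.of false ∧
      φ (QuaternionGroup.xa 0) = (PresentedGroup.of false : PresentedGroup (piRels1 n)) := by
  refine ⟨MonoidHom.toMulEquiv (DicycAux.fhom n hn) (DicycAux.ghom n)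
    (DicycAux.gf_id n hn) (DicycAux.fg_id n hn), ?_, ?_⟩
  · show DicycAux.fhom n hn (QuaternionGroup.a 1) = _
    show DicycAux.pp n 1 = _
    rw [DicycAux.pone n hn]
    rfl
  · show DicycAux.fhom n hn (QuaternionGroup.xa 0) = _
    show DicycAux.vv n * DicycAux.pp n 0 = _
    rw [DicycAux.pp, ZMod.val_zero, pow_zero, mul_one]
    rfl
end

section
/- If n is odd, the dicyclic group DC_{4n} is isomorphic to the group Π_{4n,0} with presentation ⟨u, v | u^2 = v^2, u^4 = e, u^2(uv)^n = e⟩, via the map sending a ↦ vu and x ↦ v (with inverse u ↦ a^{n-1}x, v ↦ x). -/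
/-- Relations of `Π_{4n,0} = ⟨u, v | u² = v², u⁴ = e, u²(uv)ⁿ = e⟩`,
with `u` encoded as `FreeGroup.of true` and `v` as `FreeGroup.of false`. -/
def piRels0 (n : ℕ) : Set (FreeGroup Bool) :=
  {FreeGroup.of true ^ 2 * (FreeGroup.of false ^ 2)⁻¹,
   FreeGroup.of true ^ 4,
   FreeGroup.of true ^ 2 * (FreeGroup.of true * FreeGroup.of false) ^ n}

namespace DicyclicPi0Aux

variable {n : ℕ}

/-- `u` in the presented group. -/
def U : PresentedGroup (piRels0 n) := PresentedGroup.of true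

/-- `v` in the presented group. -/
def V : PresentedGroup (piRels0 n) := PresentedGroup.of false

lemma mk_rel {r : FreeGroup Bool} (hr : r ∈ piRels0 n) :
    PresentedGroup.mk (piRels0 n) r = 1 :=
  (QuotientGroup.eq_one_iff _).2 (Subgroup.subset_normalClosure hr)

lemma rel1 : (U : PresentedGroup (piRels0 n)) ^ 2 = V ^ 2 := by
  have h := mk_rel (n := n) (Set.mem_insert _ _)
  simp only [map_mul, map_pow, map_inv] at h
  exact mul_inv_eq_one.1 h

lemma rel2 : (U : PresentedGroup (piRels0 n)) ^ 4 = 1 := by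
  have h := mk_rel (n := n) (Set.mem_insert_of_mem _ (Set.mem_insert _ _))
  simp only [map_pow] at h
  exact h

lemma rel3 : (U : PresentedGroup (piRels0 n)) ^ 2 * (U * V) ^ n = 1 := by
  have h := mk_rel (n := n)
    (Set.mem_insert_of_mem _ (Set.mem_insert_of_mem _ rfl))
  simp only [map_mul, map_pow] at h
  exact h

lemma hV4 : (V : PresentedGroup (piRels0 n)) ^ 4 = 1 := by
  rw [show (4 : ℕ) = 2 * 2 from rfl, pow_mul, ← rel1, ← pow_mul]
  exact rel2

lemma hUVn : ((U : PresentedGroup (piRels0 n)) * V) ^ n = U ^ 2 := by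
  have h := rel3 (n := n)
  have h2 : ((U : PresentedGroup (piRels0 n)) ^ 2)⁻¹ = U ^ 2 := by
    apply inv_eq_of_mul_eq_one_right
    rw [← pow_add]
    exact rel2
  have h3 := inv_eq_of_mul_eq_one_right h
  rw [h2] at h3
  exact h3.symm

lemma swap_pow {G : Type*} [Group G] (a b : G) (k : ℕ) :
    a * (b * a) ^ k = (a * b) ^ k * a := by
  induction k with
  | zero => simp
  | succ k ih =>
    rw [pow_succ, pow_succ, ← mul_assoc, ih]
    group

lemma hAn : ((V : PresentedGroup (piRels0 n)) * U) ^ n = V ^ 2 := by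
  have h := swap_pow (V : PresentedGroup (piRels0 n)) U n
  rw [hUVn, rel1] at h
  have h2 : (V : PresentedGroup (piRels0 n)) * V ^ 2 = V ^ 2 * V := by group
  rw [h2] at h
  exact mul_right_cancel h.symm

lemma hA2n : ((V : PresentedGroup (piRels0 n)) * U) ^ (2 * n) = 1 := by
  rw [mul_comm 2 n, pow_mul, hAn, ← pow_mul]
  exact hV4

lemma hAV : (V : PresentedGroup (piRels0 n)) * U * V = V * (V * U)⁻¹ := by
  have key : (U : PresentedGroup (piRels0 n)) * (V * V) * U = 1 := by
    rw [show (V : PresentedGroup (piRels0 n)) * V = V ^ 2 from (pow_two V).symm, ← rel1]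
    have h : (U : PresentedGroup (piRels0 n)) * U ^ 2 * U = U ^ 4 := by group
    rw [h]
    exact rel2
  rw [← mul_inv_eq_one]
  have expand : (V : PresentedGroup (piRels0 n)) * U * V * (V * (V * U)⁻¹)⁻¹
      = V * (U * (V * V) * U) * V⁻¹ := by group
  rw [expand, key, mul_one, mul_inv_cancel]

lemma hconj (k : ℕ) :
    ((V : PresentedGroup (piRels0 n)) * U) ^ k * V = V * (((V * U) ^ k)⁻¹) := by
  induction k with
  | zero => simp
  | succ k ih =>
    calc ((V : PresentedGroup (piRels0 n)) * U) ^ (k + 1) * V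
        = (V * U) ^ k * ((V * U) * V) := by rw [pow_succ]; group
      _ = (V * U) ^ k * (V * (V * U)⁻¹) := by rw [hAV]
      _ = ((V * U) ^ k * V) * (V * U)⁻¹ := by group
      _ = V * ((V * U) ^ k)⁻¹ * (V * U)⁻¹ := by rw [ih]
      _ = V * ((V * U) ^ (k + 1))⁻¹ := by rw [pow_succ', mul_inv_rev (V * U), mul_assoc]

/-- The promised power map `ZMod (2n) → P`, `i ↦ (vu)^i`. -/
def fA (i : ZMod (2 * n)) : PresentedGroup (piRels0 n) := (V * U) ^ i.val

lemma fA_add (hn : 3 ≤ n) (i j : ZMod (2 * n)) : fA (i + j) = fA i * fA j := by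
  haveI : NeZero (2 * n) := ⟨by omega⟩
  unfold fA
  rw [ZMod.val_add, ← pow_eq_pow_mod _ hA2n, pow_add]

lemma fA_zero (hn : 3 ≤ n) : fA (0 : ZMod (2 * n)) = 1 := by
  haveI : NeZero (2 * n) := ⟨by omega⟩
  simp [fA]

lemma fA_neg (hn : 3 ≤ n) (i : ZMod (2 * n)) : fA (-i) = (fA i)⁻¹ := by
  apply eq_inv_of_mul_eq_one_left
  rw [← fA_add hn, neg_add_cancel, fA_zero hn]

lemma fA_V (hn : 3 ≤ n) (i : ZMod (2 * n)) : fA i * V = V * fA (-i) := by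
  rw [fA_neg hn]
  exact hconj i.val

lemma fA_n (hn : 3 ≤ n) : fA ((n : ℕ) : ZMod (2 * n)) = V ^ 2 := by
  unfold fA
  rw [ZMod.val_natCast_of_lt (by omega)]
  exact hAn

/-- The homomorphism `DC_{4n} → Π`. -/
def phi (hn : 3 ≤ n) : QuaternionGroup n →* PresentedGroup (piRels0 n) :=
  MonoidHom.mk'
    (fun q => match q with
      | .a i => fA i
      | .xa i => V * fA i)
    (by
      rintro (i | i) (j | j)
      · show fA (i + j) = fA i * fA j
        exact fA_add hn i j
      · show V * fA (j - i) = fA i * (V * fA j)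
        rw [← mul_assoc, fA_V hn, mul_assoc, ← fA_add hn]
        congr 1
        ring
      · show V * fA (i + j) = V * fA i * fA j
        rw [mul_assoc, ← fA_add hn]
      · show fA ((n : ZMod (2 * n)) + j - i) = V * fA i * (V * fA j)
        have harg : ((n : ZMod (2 * n)) + j - i) = ((n : ℕ) : ZMod (2 * n)) + (-i + j) := by
          ring
        rw [harg, fA_add hn, fA_add hn, fA_n hn]
        calc V ^ 2 * (fA (-i) * fA j)
            = V * (V * fA (-i)) * fA j := by rw [pow_two]; group
          _ = V * (fA i * V) * fA j := by rw [fA_V hn]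
          _ = V * fA i * (V * fA j) := by group)

lemma a_pow (j : ZMod (2 * n)) (k : ℕ) :
    (QuaternionGroup.a j : QuaternionGroup n) ^ k = .a ((k : ZMod (2 * n)) * j) := by
  induction k with
  | zero => simp
  | succ k ih =>
    rw [pow_succ, ih, QuaternionGroup.a_mul_a]
    congr 1
    push_cast
    ring

/-- Images of the generators `u, v` in `DC_{4n}`. -/
def gfun : Bool → QuaternionGroup n := fun b =>
  match b with
  | true => .xa ((1 : ZMod (2 * n)) - (n : ZMod (2 * n)))
  | false => .xa 0

lemma grels (hn : 3 ≤ n) : ∀ r ∈ piRels0 n, FreeGroup.lift (gfun (n := n)) r = 1 := by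
  have h2n : ((2 * n : ℕ) : ZMod (2 * n)) = 0 := ZMod.natCast_self _
  intro r hr
  simp only [piRels0, Set.mem_insert_iff, Set.mem_singleton_iff] at hr
  rcases hr with rfl | rfl | rfl
  · simp [gfun]
  · simp [gfun]
  · simp only [map_mul, map_pow, FreeGroup.lift_apply_of, gfun, if_true, if_false,
      QuaternionGroup.xa_sq, QuaternionGroup.xa_mul_xa, a_pow, QuaternionGroup.a_mul_a,
      QuaternionGroup.one_def]
    congr 1
    push_cast at h2n ⊢
    linear_combination (n : ZMod (2 * n)) * h2n

/-- The homomorphism `Π → DC_{4n}`. -/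
def psi (hn : 3 ≤ n) : PresentedGroup (piRels0 n) →* QuaternionGroup n :=
  PresentedGroup.toGroup (grels hn)

lemma psi_U (hn : 3 ≤ n) : psi hn (U : PresentedGroup (piRels0 n)) = .xa ((1 : ZMod (2 * n)) - (n : ZMod (2 * n))) := by
  simp [psi, U, PresentedGroup.toGroup.of, gfun]

lemma psi_V (hn : 3 ≤ n) : psi hn (V : PresentedGroup (piRels0 n)) = .xa 0 := by
  simp [psi, V, PresentedGroup.toGroup.of, gfun]

lemma psi_fA (hn : 3 ≤ n) (i : ZMod (2 * n)) : psi hn (fA i) = .a i := by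
  haveI : NeZero (2 * n) := ⟨by omega⟩
  rw [fA, map_pow, map_mul, psi_U hn, psi_V hn]
  rw [QuaternionGroup.xa_mul_xa]
  have : ((n : ZMod (2 * n)) + ((1 : ZMod (2 * n)) - (n : ZMod (2 * n))) - 0) = 1 := by ring
  rw [this, QuaternionGroup.a_one_pow, ZMod.natCast_val, ZMod.cast_id]

lemma comp_left (hn : 3 ≤ n) :
    (psi hn).comp (phi hn) = MonoidHom.id (QuaternionGroup n) := by
  ext q
  rcases q with i | i
  · show psi hn (fA i) = .a i
    exact psi_fA hn i
  · show psi hn (V * fA i) = .xa i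
    rw [map_mul, psi_V hn, psi_fA hn, QuaternionGroup.xa_mul_a, zero_add]

lemma comp_right (hn : 3 ≤ n) :
    (phi hn).comp (psi hn) = MonoidHom.id (PresentedGroup (piRels0 n)) := by
  apply PresentedGroup.ext
  intro b
  cases b
  · show phi hn (psi hn (V : PresentedGroup (piRels0 n))) = V
    rw [psi_V hn]
    show (V : PresentedGroup (piRels0 n)) * fA 0 = V
    rw [fA_zero hn, mul_one]
  · show phi hn (psi hn (U : PresentedGroup (piRels0 n))) = U
    rw [psi_U hn]
    show (V : PresentedGroup (piRels0 n)) * fA ((1 : ZMod (2 * n)) - (n : ZMod (2 * n))) = U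
    have harg : ((1 : ZMod (2 * n)) - (n : ZMod (2 * n))) = ((n + 1 : ℕ) : ZMod (2 * n)) := by
      have h2n : ((2 * n : ℕ) : ZMod (2 * n)) = 0 := ZMod.natCast_self _
      push_cast at h2n ⊢
      linear_combination -h2n
    rw [harg]
    unfold fA
    rw [ZMod.val_natCast_of_lt (by omega), pow_succ, hAn]
    have : (V : PresentedGroup (piRels0 n)) * (V ^ 2 * (V * U)) = V ^ 4 * U := by group
    rw [this, hV4, one_mul]

end DicyclicPi0Aux

open DicyclicPi0Aux in
/-- For odd `n`, `DC_{4n} ≅ Π_{4n,0}` via `a ↦ vu`, `x ↦ v`. -/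
theorem dicyclic_iso_pi0 (n : ℕ) (hn : 3 ≤ n) (hodd : Odd n) :
    ∃ φ : QuaternionGroup n ≃* PresentedGroup (piRels0 n),
      φ (QuaternionGroup.a 1) =
        (PresentedGroup.of false : PresentedGroup (piRels0 n)) * PresentedGroup.of true ∧
      φ (QuaternionGroup.xa 0) = (PresentedGroup.of false : PresentedGroup (piRels0 n)) := by
  refine ⟨MonoidHom.toMulEquiv (phi hn) (psi hn) (comp_left hn) (comp_right hn), ?_, ?_⟩
  · show phi hn (.a 1) = V * U
    show fA 1 = V * U
    haveI : Fact (1 < 2 * n) := ⟨by omega⟩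
    rw [fA, ZMod.val_one, pow_one]
  · show phi hn (.xa 0) = V
    show V * fA 0 = V
    rw [fA_zero hn, mul_one]
end

section
/- Suppose DC_{4n} = ⟨b, y⟩ where b lies in the cyclic subgroup ⟨a⟩ and y lies in the coset ⟨a⟩x. Then either b has order 2n, or n is odd and b has order n. -/
/-- The natural quotient hom from the dicyclic group to the dihedral group `D_p` when `p ∣ n`. -/
def quatToDihedral (n p : ℕ) (h : p ∣ n) : QuaternionGroup n →* DihedralGroup p where
  toFun g :=
    match g with
    | .a i => DihedralGroup.r (ZMod.castHom (h.mul_left 2) (ZMod p) i)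
    | .xa i => DihedralGroup.sr (ZMod.castHom (h.mul_left 2) (ZMod p) i)
  map_one' := by
    simp only [QuaternionGroup.one_def, DihedralGroup.one_def, map_zero]
  map_mul' g₁ g₂ := by
    have hn0 : (ZMod.castHom (h.mul_left 2) (ZMod p)) ((n : ℕ) : ZMod (2*n)) = 0 := by
      rw [map_natCast]
      exact (ZMod.natCast_eq_zero_iff n p).mpr h
    cases g₁ with
    | a i => cases g₂ with
      | a j => show DihedralGroup.r _ = DihedralGroup.r _ * DihedralGroup.r _
               rw [DihedralGroup.r_mul_r, map_add]
      | xa j => show DihedralGroup.sr _ = DihedralGroup.r _ * DihedralGroup.sr _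
                rw [DihedralGroup.r_mul_sr, map_sub]
    | xa i => cases g₂ with
      | a j => show DihedralGroup.sr _ = DihedralGroup.sr _ * DihedralGroup.r _
               rw [DihedralGroup.sr_mul_r, map_add]
      | xa j => show DihedralGroup.r _ = DihedralGroup.sr _ * DihedralGroup.sr _
                rw [DihedralGroup.sr_mul_sr, map_sub, map_add, hn0, zero_add]

lemma r_one_zpow_form (p : ℕ) (k : ℤ) :
    ∃ c : ZMod p, (DihedralGroup.r 1 : DihedralGroup p) ^ k = DihedralGroup.r c := by
  have hinv : ∀ c : ZMod p, (DihedralGroup.r c)⁻¹ = DihedralGroup.r (-c) := by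
    intro c
    refine inv_eq_of_mul_eq_one_right ?_
    rw [DihedralGroup.r_mul_r, add_neg_cancel, DihedralGroup.one_def]
  cases k with
  | ofNat u => exact ⟨u, by rw [Int.ofNat_eq_coe, zpow_natCast, DihedralGroup.r_one_pow]⟩
  | negSucc u =>
    refine ⟨-(u+1 : ℕ), ?_⟩
    rw [zpow_negSucc, DihedralGroup.r_one_pow, hinv]

/-- If `DC_{4n} = ⟨b, y⟩` with `b ∈ ⟨a⟩` and `y ∈ ⟨a⟩x`, then either `b` has order `2n`,
or `n` is odd and `b` has order `n`. -/
theorem dicyclic_generator_order_dichotomy (n : ℕ) (hn : 2 ≤ n) (b y : QuaternionGroup n)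
    (hb : b ∈ Subgroup.zpowers (QuaternionGroup.a 1 : QuaternionGroup n))
    (hy : ∃ j : ℤ, y = (QuaternionGroup.a 1 : QuaternionGroup n) ^ j * QuaternionGroup.xa 0)
    (hgen : Subgroup.closure ({b, y} : Set (QuaternionGroup n)) = ⊤) :
    orderOf b = 2 * n ∨ (Odd n ∧ orderOf b = n) := by
  haveI : NeZero n := ⟨by omega⟩
  obtain ⟨m, hm⟩ := hb
  beta_reduce at hm
  set M := m.natAbs with hM
  -- coprimality of M and n
  have hcop : Nat.Coprime M n := by
    rw [Nat.coprime_iff_gcd_eq_one]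
    by_contra hg
    have hgdvd : Nat.gcd M n ∣ n := Nat.gcd_dvd_right M n
    have hgne : Nat.gcd M n ≠ 0 := fun h0 => by
      have := Nat.eq_zero_of_gcd_eq_zero_right h0; omega
    obtain ⟨p, hp, hpdvd⟩ := Nat.exists_prime_and_dvd hg
    have hpn : p ∣ n := hpdvd.trans hgdvd
    have hpM : p ∣ M := hpdvd.trans (Nat.gcd_dvd_left M n)
    set φ := quatToDihedral n p hpn with hφ
    have hφa : φ (QuaternionGroup.a 1) = DihedralGroup.r 1 := by
      show DihedralGroup.r _ = DihedralGroup.r 1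
      rw [map_one]
    have hφb : φ b = 1 := by
      rw [← hm, map_zpow, hφa]
      rw [← orderOf_dvd_iff_zpow_eq_one, DihedralGroup.orderOf_r_one]
      rwa [← Int.natAbs_dvd_natAbs, Int.natAbs_natCast]
    obtain ⟨j, rfl⟩ := hy
    obtain ⟨c, hc⟩ := r_one_zpow_form p j
    have hφy : φ ((QuaternionGroup.a 1 : QuaternionGroup n) ^ j * QuaternionGroup.xa 0)
        = DihedralGroup.sr (-c) := by
      rw [map_mul, map_zpow, hφa, hc]
      have hx0 : φ (QuaternionGroup.xa 0) = DihedralGroup.sr 0 := by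
        show DihedralGroup.sr _ = DihedralGroup.sr 0
        rw [map_zero]
      rw [hx0, DihedralGroup.r_mul_sr, zero_sub]
    -- r 1 lies in the image of the closure, hence in zpowers (sr (-c))
    have hmem : DihedralGroup.r 1 ∈ Subgroup.zpowers (DihedralGroup.sr (-c) : DihedralGroup p) := by
      have h2 : DihedralGroup.r 1 ∈ (⊤ : Subgroup (QuaternionGroup n)).map φ :=
        ⟨QuaternionGroup.a 1, trivial, hφa⟩
      rw [← hgen, MonoidHom.map_closure] at h2
      have h3 : φ '' {b, (QuaternionGroup.a 1 : QuaternionGroup n) ^ j * QuaternionGroup.xa 0}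
          ⊆ (Subgroup.zpowers (DihedralGroup.sr (-c) : DihedralGroup p) : Set (DihedralGroup p)) := by
        rintro z ⟨w, (rfl | rfl), rfl⟩
        · rw [hφb]; exact Subgroup.one_mem _
        · rw [hφy]; exact Subgroup.mem_zpowers _
      exact (Subgroup.closure_le _).mpr h3 h2
    obtain ⟨k, hk⟩ := hmem
    beta_reduce at hk
    have hsq : (DihedralGroup.sr (-c) : DihedralGroup p) ^ 2 = 1 := by
      rw [sq, DihedralGroup.sr_mul_sr, sub_self, DihedralGroup.one_def]
    rcases Int.even_or_odd k with ⟨t, rfl⟩ | ⟨t, rfl⟩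
    · rw [show t + t = 2 * t by ring, zpow_mul, zpow_ofNat, hsq, one_zpow] at hk
      have : (1 : ZMod p) = 0 := by
        have := hk.symm
        rw [DihedralGroup.one_def] at this
        exact (DihedralGroup.r.injEq _ _).mp this
      have : ((1 : ℕ) : ZMod p) = 0 := by exact_mod_cast this
      have := (ZMod.natCast_eq_zero_iff 1 p).mp this
      exact hp.one_lt.ne' (Nat.eq_one_of_dvd_one this) |>.elim
    · rw [zpow_add, zpow_mul, zpow_ofNat, hsq, one_zpow, one_mul, zpow_one] at hk
      exact absurd hk (by simp)
  -- now compute the order of b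
  have hord : orderOf b = 2 * n / Nat.gcd (2 * n) M := by
    have h1 : orderOf b = orderOf ((QuaternionGroup.a 1 : QuaternionGroup n) ^ M) := by
      rcases Int.natAbs_eq m with h | h
      · rw [← hm, h, zpow_natCast]
      · rw [← hm, h, zpow_neg, zpow_natCast, orderOf_inv]
    rw [h1, orderOf_pow, QuaternionGroup.orderOf_a_one]
  have hgcd : Nat.gcd (2 * n) M = Nat.gcd 2 M := by
    rw [mul_comm]
    exact Nat.Coprime.gcd_mul_left_cancel 2 hcop.symm
  rcases Nat.even_or_odd M with hMe | hMo
  · -- M even, so n is odd, order n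
    right
    have h2M : 2 ∣ M := hMe.two_dvd
    have hnodd : Odd n := by
      have : Nat.Coprime 2 n := Nat.Coprime.coprime_dvd_left h2M hcop
      exact Nat.coprime_two_left.mp this
    refine ⟨hnodd, ?_⟩
    rw [hord, hgcd, Nat.gcd_eq_left h2M, Nat.mul_div_cancel_left n (by norm_num)]
  · -- M odd, order 2n
    left
    have : Nat.gcd 2 M = 1 := Nat.coprime_two_left.mpr hMo
    rw [hord, hgcd, this, Nat.div_one]
end
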